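/- arXiv:math/0304341 — 2 statements merged into one kernel-verified Lean document; each statement's English description precedes it below -/
import Mathlib

section
/- Let h be a unit vector in H and S = (l(h) + l(h)*)/2 on the full Fock space, and let ω be the vacuum state ω(T) = ⟨T1, 1⟩. Then ω(S^n) equals the n-th moment of the standard semicircular law μ_{0,1}: ω(S^{2k}) = C_k/4^k (C_k the Catalan number) and ω(S^{2k+1}) = 0. -/
open scoped InnerProductSpace ComplexConjugate

/-- A realization of the full Fock space `T(H) = ℂ1 ⊕ ⨁_{n≥1} H^{⊗n}` over a complex
Hilbert space `H`, on a Hilbert space `F`: `emb n ξ` is the elementary tensor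
`ξ₀ ⊗ ⋯ ⊗ ξ_{n-1}` (with `emb 0` the vacuum vector `1`), elementary tensors have the
prescribed inner products and total linear span dense in `F`, and `l h` is the left
creation operator `ξ ↦ h ⊗ ξ`. -/
structure FullFock (H : Type*) [NormedAddCommGroup H] [InnerProductSpace ℂ H]
    (F : Type*) [NormedAddCommGroup F] [InnerProductSpace ℂ F] [CompleteSpace F] where
  emb : ∀ n : ℕ, (Fin n → H) → F
  inner_emb : ∀ (m n : ℕ) (ξ : Fin m → H) (η : Fin n → H),
    ⟪emb m ξ, emb n η⟫_ℂ =
      if h : m = n then ∏ i : Fin m, ⟪ξ i, η (Fin.cast h i)⟫_ℂ else 0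
  dense_span :
    (Submodule.span ℂ
        (Set.range fun p : Σ n : ℕ, (Fin n → H) => emb p.1 p.2)).topologicalClosure = ⊤
  l : H → F →L[ℂ] F
  l_emb : ∀ (h : H) (n : ℕ) (ξ : Fin n → H),
    l h (emb n ξ) = emb (n + 1) (Fin.cons h ξ)

/-- The vacuum vector of a full Fock space. -/
def FullFock.vacuum {H : Type*} [NormedAddCommGroup H] [InnerProductSpace ℂ H]
    {F : Type*} [NormedAddCommGroup F] [InnerProductSpace ℂ F] [CompleteSpace F]
    (T : FullFock H F) : F :=
  T.emb 0 (fun i => i.elim0)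

/-!
Writing `e n = h ⊗ ⋯ ⊗ h` (`n` factors), the `e n` are orthonormal, `l(h)` maps `e n` to
`e (n + 1)`, and `l(h)*` maps `e (n + 1)` back to `e n` and kills the vacuum `e 0`. So
`X = l(h) + l(h)*` acts on the `e n` as the adjacency operator of the half-line `ℕ`, and
`⟪Xⁿ e 0, e 0⟫` counts the `±1` walks of length `n` from `0` back to `0` that never go negative.
There are none for odd `n`, and `C_k` of them for `n = 2k` by the reflection principle. The
factor `1/2` in `S` contributes `4^{-k}`.
-/

-- `±1` walks of length `n` from `0` to `m` staying `≥ 0`, counted by their last step.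
def nonnegPathCount : ℕ → ℕ → ℕ
  | 0, 0 => 1
  | 0, _ + 1 => 0
  | n + 1, 0 => nonnegPathCount n 1
  | n + 1, m + 1 => nonnegPathCount n (m + 2) + nonnegPathCount n m

theorem nonnegPathCount_eq_zero_of_forall_ne {n m : ℕ} (h : ∀ j, n ≠ m + 2 * j) :
    nonnegPathCount n m = 0 := by
  induction n generalizing m with
  | zero =>
    obtain _ | m := m
    · exact absurd rfl (h 0)
    · rfl
  | succ n ih =>
    obtain _ | m := m
    · exact ih fun j hj => h (j + 1) (by omega)
    · rw [nonnegPathCount, ih fun j hj => h (j + 1) (by omega), ih fun j hj => h j (by omega)]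

-- Reflection principle: the walks to `m` that dip below `0` correspond to all walks to `-m - 2`.
theorem nonnegPathCount_add_two_mul (m j : ℕ) :
    (nonnegPathCount (m + 2 * j) m : ℤ) =
      (m + 2 * j).choose j - (m + 2 * j).choose (m + j + 1) := by
  induction hn : m + 2 * j generalizing m j with
  | zero =>
    obtain ⟨rfl, rfl⟩ : m = 0 ∧ j = 0 := by omega
    rfl
  | succ n ih =>
    obtain _ | m := m <;> obtain _ | j := j
    · omega
    · rw [nonnegPathCount, ih 1 j (by omega), Nat.choose_succ_succ', Nat.choose_succ_succ']
      push_cast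
      ring_nf
    · obtain rfl : m = n := by omega
      rw [nonnegPathCount, nonnegPathCount_eq_zero_of_forall_ne (by omega), zero_add,
        ih m 0 (by omega)]
      simp
    · rw [nonnegPathCount, Nat.cast_add, ih (m + 2) j (by omega), ih m (j + 1) (by omega),
        Nat.choose_succ_succ', Nat.choose_succ_succ']
      push_cast
      ring_nf

theorem catalan_eq_choose_sub_choose (k : ℕ) :
    (catalan k : ℤ) = (2 * k).choose k - (2 * k).choose (k + 1) := by
  have hcentral : ((k : ℤ) + 1) * catalan k = (2 * k).choose k := by
    exact_mod_cast succ_mul_catalan_eq_centralBinom k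
  have hsucc : ((2 * k).choose (k + 1) : ℤ) * (k + 1) = (2 * k).choose k * k := by
    have := Nat.choose_succ_right_eq (2 * k) k
    rw [show 2 * k - k = k by omega] at this
    exact_mod_cast this
  refine mul_left_cancel₀ (show (k : ℤ) + 1 ≠ 0 by positivity) ?_
  linear_combination hcentral + hsucc

theorem nonnegPathCount_two_mul_zero (k : ℕ) : nonnegPathCount (2 * k) 0 = catalan k := by
  have := nonnegPathCount_add_two_mul 0 k
  simp only [zero_add] at this
  exact_mod_cast this.trans (catalan_eq_choose_sub_choose k).symm

theorem nonnegPathCount_two_mul_add_one_zero (k : ℕ) : nonnegPathCount (2 * k + 1) 0 = 0 :=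
  nonnegPathCount_eq_zero_of_forall_ne (by omega)

theorem inner_pow_apply_eq_nonnegPathCount {𝕜 E : Type*} [RCLike 𝕜] [NormedAddCommGroup E]
    [InnerProductSpace 𝕜 E] {X : E →L[𝕜] E} (hX : (X : E →ₗ[𝕜] E).IsSymmetric) {e : ℕ → E}
    (he : Orthonormal 𝕜 e) (hX_zero : X (e 0) = e 1)
    (hX_succ : ∀ m, X (e (m + 1)) = e (m + 2) + e m) (n m : ℕ) :
    ⟪(X ^ n) (e 0), e m⟫_𝕜 = nonnegPathCount n m := by
  have hsymm (x y : E) : ⟪X x, y⟫_𝕜 = ⟪x, X y⟫_𝕜 := hX x y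
  induction n generalizing m with
  | zero =>
    rw [pow_zero, one_apply_eq_self, orthonormal_iff_ite.mp he]
    obtain _ | m := m <;> simp [nonnegPathCount]
  | succ n ih =>
    rw [pow_succ', mul_apply_eq_comp, hsymm]
    obtain _ | m := m
    · rw [hX_zero, ih, nonnegPathCount]
    · rw [hX_succ, inner_add_right, ih, ih, nonnegPathCount, Nat.cast_add]

namespace FullFock

variable {H : Type*} [NormedAddCommGroup H] [InnerProductSpace ℂ H]
  {F : Type*} [NormedAddCommGroup F] [InnerProductSpace ℂ F] [CompleteSpace F]
  (T : FullFock H F)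

theorem ext_inner_emb {x y : F} (hxy : ∀ n ξ, ⟪T.emb n ξ, x⟫_ℂ = ⟪T.emb n ξ, y⟫_ℂ) : x = y := by
  have hortho : (ℂ ∙ (x - y)) ⟂ Submodule.span ℂ
      (Set.range fun p : Σ n : ℕ, (Fin n → H) => T.emb p.1 p.2) := by
    rw [Submodule.isOrtho_span]
    rintro _ rfl _ ⟨⟨n, ξ⟩, rfl⟩
    rw [← inner_conj_symm, inner_sub_right, hxy, sub_self, map_zero]
  have hbot := Submodule.topologicalClosure_eq_top_iff.mp T.dense_span
  rw [← sub_eq_zero, ← Submodule.mem_bot ℂ, ← hbot]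
  exact Submodule.isOrtho_iff_le.mp hortho (Submodule.mem_span_singleton_self _)

theorem adjoint_l_emb_zero (h : H) (ξ : Fin 0 → H) :
    ContinuousLinearMap.adjoint (T.l h) (T.emb 0 ξ) = 0 :=
  T.ext_inner_emb fun n η => by
    rw [ContinuousLinearMap.adjoint_inner_right, T.l_emb, T.inner_emb, dif_neg n.succ_ne_zero,
      inner_zero_right]

theorem adjoint_l_emb_succ (h g : H) {n : ℕ} (ξ : Fin n → H) :
    ContinuousLinearMap.adjoint (T.l h) (T.emb (n + 1) (Fin.cons g ξ)) =
      ⟪h, g⟫_ℂ • T.emb n ξ :=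
  T.ext_inner_emb fun m η => by
    rw [ContinuousLinearMap.adjoint_inner_right, T.l_emb, T.inner_emb, inner_smul_right,
      T.inner_emb]
    by_cases hmn : m = n
    · subst hmn
      simp [Fin.prod_univ_succ]
    · rw [dif_neg (by omega), dif_neg hmn, mul_zero]

theorem orthonormal_emb_const {h : H} (hh : ‖h‖ = 1) :
    Orthonormal ℂ fun n => T.emb n fun _ => h := by
  rw [orthonormal_iff_ite]
  intro m n
  rw [T.inner_emb]
  split_ifs with hmn
  · simp [inner_self_eq_norm_sq_to_K, hh]
  · rfl

theorem l_emb_const (h : H) (n : ℕ) :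
    T.l h (T.emb n fun _ => h) = T.emb (n + 1) fun _ => h := by
  rw [T.l_emb]
  exact congrArg _ (funext (Fin.cases rfl fun _ => rfl))

theorem adjoint_l_emb_const_succ {h : H} (hh : ‖h‖ = 1) (n : ℕ) :
    ContinuousLinearMap.adjoint (T.l h) (T.emb (n + 1) fun _ => h) = T.emb n fun _ => h := by
  have hcons : (Fin.cons h fun _ : Fin n => h) = fun _ => h := funext (Fin.cases rfl fun _ => rfl)
  rw [← hcons, T.adjoint_l_emb_succ, inner_self_eq_one_of_norm_eq_one hh, one_smul]

end FullFock

/-- For a unit vector `h`, the moments of `S = (l(h) + l(h)*)/2` in the vacuum state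
`ω(T) = ⟨T1, 1⟩` are those of the standard semicircular law `μ_{0,1}`:
`ω(S^{2k}) = C_k / 4^k` (with `C_k` the `k`-th Catalan number) and `ω(S^{2k+1}) = 0`. -/
theorem vacuum_moments_semicircular {H : Type*} [NormedAddCommGroup H]
    [InnerProductSpace ℂ H]
    {F : Type*} [NormedAddCommGroup F] [InnerProductSpace ℂ F] [CompleteSpace F]
    (T : FullFock H F) (h : H) (hh : ‖h‖ = 1)
    (S : F →L[ℂ] F)
    (hS : S = (2 : ℂ)⁻¹ • (T.l h + ContinuousLinearMap.adjoint (T.l h)))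
    (ω : (F →L[ℂ] F) → ℂ) (hω : ∀ X : F →L[ℂ] F, ω X = ⟪X T.vacuum, T.vacuum⟫_ℂ) :
    ∀ k : ℕ, ω (S ^ (2 * k)) = (catalan k : ℂ) / 4 ^ k ∧ ω (S ^ (2 * k + 1)) = 0 := by
  have hvacuum : T.vacuum = T.emb 0 fun _ => h := congrArg (T.emb 0) (funext fun i => i.elim0)
  have hX : ((T.l h + ContinuousLinearMap.adjoint (T.l h) : F →L[ℂ] F) : F →ₗ[ℂ] F).IsSymmetric :=
    (IsSelfAdjoint.add_star_self (T.l h)).isSymmetric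
  have hmoment (n : ℕ) : ω (S ^ n) = nonnegPathCount n 0 / 2 ^ n := by
    rw [hω, hS, smul_pow, smul_apply, inner_smul_left, hvacuum,
      inner_pow_apply_eq_nonnegPathCount hX (T.orthonormal_emb_const hh)]
    · simp [div_eq_inv_mul, Complex.conj_ofNat]
    · simp [T.l_emb_const, T.adjoint_l_emb_zero]
    · simp [T.l_emb_const, T.adjoint_l_emb_const_succ hh]
  intro k
  rw [hmoment, hmoment, nonnegPathCount_two_mul_zero, nonnegPathCount_two_mul_add_one_zero]
  norm_num [pow_mul]
end

section
/- Free central limit theorem at the level of second and fourth moments: if A₁, ..., Aₙ are freely independent, identically distributed, centered self-adjoint variables with τ(Aⱼ²) = σ², then Sₙ = (A₁+⋯+Aₙ)/√n satisfies τ(Sₙ²) = σ² and τ(Sₙ⁴) → 2σ⁴ as n → ∞, matching the fourth moment of the semicircular law of variance σ². -/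
open Filter

/-- Free independence of a family of unital subalgebras with respect to `τ`:
the trace of any product of centered elements with consecutive factors from
distinct members of the family vanishes. -/
def FreeFamily {A : Type*} [Ring A] [Algebra ℂ A] (τ : A →ₗ[ℂ] ℂ)
    (S : ℕ → Subalgebra ℂ A) : Prop :=
  ∀ (n : ℕ) (x : Fin n → A) (ι : Fin n → ℕ),
    (∀ i, x i ∈ S (ι i)) →
    (∀ (i : Fin n) (h : (i : ℕ) + 1 < n), ι i ≠ ι ⟨(i : ℕ) + 1, h⟩) →
    (∀ i, τ (x i) = 0) →
    τ (List.ofFn x).prod = 0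

section Aux
variable {A : Type*} [Ring A] [Algebra ℂ A] (τ : A →ₗ[ℂ] ℂ) {S : ℕ → Subalgebra ℂ A}

lemma free_two (h : FreeFamily τ S) {a b : A} {i j : ℕ} (hij : i ≠ j)
    (ha : a ∈ S i) (hb : b ∈ S j) (ha0 : τ a = 0) (hb0 : τ b = 0) :
    τ (a * b) = 0 := by
  have := h 2 ![a, b] ![i, j] (by intro t; fin_cases t <;> simpa)
      (by intro t ht; rcases t with ⟨tv, htv⟩; interval_cases tv
          · simpa using hij
          · simp at ht)
      (by intro t; fin_cases t <;> simpa)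
  simpa [List.ofFn_succ] using this

lemma free_three (h : FreeFamily τ S) {a b c : A} {i j k : ℕ}
    (hij : i ≠ j) (hjk : j ≠ k)
    (ha : a ∈ S i) (hb : b ∈ S j) (hc : c ∈ S k)
    (ha0 : τ a = 0) (hb0 : τ b = 0) (hc0 : τ c = 0) :
    τ (a * (b * c)) = 0 := by
  have := h 3 ![a, b, c] ![i, j, k] (by intro t; fin_cases t <;> simpa)
      (by intro t ht; rcases t with ⟨tv, htv⟩; interval_cases tv
          · simpa using hij
          · simpa using hjk
          · simp at ht)
      (by intro t; fin_cases t <;> simpa)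
  simpa [List.ofFn_succ, mul_assoc] using this

lemma free_four (h : FreeFamily τ S) {a b c d : A} {i j k l : ℕ}
    (hij : i ≠ j) (hjk : j ≠ k) (hkl : k ≠ l)
    (ha : a ∈ S i) (hb : b ∈ S j) (hc : c ∈ S k) (hd : d ∈ S l)
    (ha0 : τ a = 0) (hb0 : τ b = 0) (hc0 : τ c = 0) (hd0 : τ d = 0) :
    τ (a * b * (c * d)) = 0 := by
  have := h 4 ![a, b, c, d] ![i, j, k, l] (by intro t; fin_cases t <;> simpa)
      (by intro t ht; rcases t with ⟨tv, htv⟩; interval_cases tv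
          · simpa using hij
          · simpa using hjk
          · simpa using hkl
          · simp at ht)
      (by intro t; fin_cases t <;> simpa)
  simpa [List.ofFn_succ, mul_assoc] using this

lemma tau_algebraMap (hτ1 : τ 1 = 1) (c : ℂ) : τ (algebraMap ℂ A c) = c := by
  rw [Algebra.algebraMap_eq_smul_one, map_smul, hτ1, smul_eq_mul, mul_one]

lemma tau_aM_mul (c : ℂ) (x : A) : τ (algebraMap ℂ A c * x) = c * τ x := by
  rw [← Algebra.smul_def, map_smul, smul_eq_mul]

end Aux

lemma sum_if_const {M : Type*} [AddCommMonoid M] (p : Prop) [Decidable p]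
    {ι : Type*} (s : Finset ι) (f : ι → M) :
    (∑ x ∈ s, if p then f x else 0) = if p then ∑ x ∈ s, f x else 0 := by
  split <;> simp

section Classify
variable {A : Type*} [Ring A] [Algebra ℂ A]

lemma classify (τ : A →ₗ[ℂ] ℂ) (hτ1 : τ 1 = 1)
    (htrace : ∀ x y : A, τ (x * y) = τ (y * x))
    (X : ℕ → A) (v m4 : ℂ)
    (hfree : FreeFamily τ (fun j => Algebra.adjoin ℂ {X j}))
    (hcent : ∀ j, τ (X j) = 0)
    (hvar : ∀ j, τ (X j ^ 2) = v)
    (hm4 : ∀ j, τ (X j ^ 4) = m4)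
    (i j k l : ℕ) :
    τ (X i * X j * (X k * X l)) =
      (if k = l ∧ i = j then v ^ 2 else 0) + (if i = l ∧ j = k then v ^ 2 else 0)
        + (if k = l ∧ j = k ∧ i = j then m4 - 2 * v ^ 2 else 0) := by
  have hmem : ∀ m : ℕ, X m ∈ Algebra.adjoin ℂ {X m} :=
    fun m => Algebra.subset_adjoin (Set.mem_singleton _)
  have hτs : ∀ (c : ℂ) (x : A), τ (c • x) = c * τ x := fun c x => by
    rw [map_smul, smul_eq_mul]
  set Y : ℕ → A := fun m => X m ^ 2 - v • (1 : A) with hYdef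
  have hYmem : ∀ m, Y m ∈ Algebra.adjoin ℂ {X m} :=
    fun m => sub_mem (pow_mem (hmem m) 2)
      (Subalgebra.smul_mem _ (one_mem _) v)
  have hY0 : ∀ m, τ (Y m) = 0 := by
    intro m; simp [hYdef, hvar, hτ1]
  have h2 : ∀ m n, m ≠ n → τ (X m * X n) = 0 :=
    fun m n h => free_two τ hfree h (hmem m) (hmem n) (hcent m) (hcent n)
  have hcube : ∀ m n, m ≠ n → τ (X m ^ 3 * X n) = 0 := by
    intro m n h
    have key : τ ((X m ^ 3 - τ (X m ^ 3) • (1 : A)) * X n) = 0 :=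
      free_two τ hfree h
        (sub_mem (pow_mem (hmem m) 3) (Subalgebra.smul_mem _ (one_mem _) _))
        (hmem n) (by simp [hτ1]) (hcent n)
    rw [sub_mul, map_sub, smul_mul_assoc, one_mul, hτs, hcent, mul_zero,
      sub_zero] at key
    exact key
  by_cases hij : i = j <;> by_cases hjk : j = k <;> by_cases hkl : k = l
  · -- all equal
    subst hij; subst hjk; subst hkl
    have e : X i * X i * (X i * X i) = X i ^ 4 := by noncomm_ring
    rw [e, hm4]
    simp; ring
  · -- i = j = k ≠ l
    subst hij; subst hjk
    have e : X i * X i * (X i * X l) = X i ^ 3 * X l := by noncomm_ring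
    rw [e, hcube i l hkl]
    simp [hkl]
  · -- i = j, j ≠ k, k = l
    subst hij; subst hkl
    have hik : i ≠ k := hjk
    have e1 : X i * X i * (X k * X k) = Y i * (X k * X k) + v • (X k * X k) := by
      simp [hYdef, sub_mul, smul_mul_assoc, pow_two]
    have e2 : Y i * (X k * X k) = Y i * Y k + v • Y i := by
      simp [hYdef, mul_sub, mul_smul_comm, pow_two]
    have hYY : τ (Y i * Y k) = 0 :=
      free_two τ hfree hik (hYmem i) (hYmem k) (hY0 i) (hY0 k)
    rw [e1, map_add, e2, map_add, hYY, hτs, hτs, hY0, mul_zero,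
      show X k * X k = X k ^ 2 from (pow_two _).symm, hvar]
    simp [hik]; ring
  · -- i = j, j ≠ k, k ≠ l
    subst hij
    have e1 : X i * X i * (X k * X l) = Y i * (X k * X l) + v • (X k * X l) := by
      simp [hYdef, sub_mul, smul_mul_assoc, pow_two]
    have h3 : τ (Y i * (X k * X l)) = 0 :=
      free_three τ hfree hjk hkl (hYmem i) (hmem k) (hmem l) (hY0 i) (hcent k) (hcent l)
    rw [e1, map_add, h3, hτs, h2 k l hkl, mul_zero, add_zero]
    simp [hjk, hkl]
  · -- i ≠ j, j = k = l
    subst hjk; subst hkl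
    have e1 : X i * X j * (X j * X j) = X i * X j ^ 3 := by noncomm_ring
    rw [e1, htrace, hcube j i (Ne.symm hij)]
    simp [hij, Ne.symm hij]
  · -- i ≠ j, j = k, k ≠ l
    subst hjk
    have e1 : X i * X j * (X j * X l) = X i * (Y j * X l) + v • (X i * X l) := by
      rw [hYdef]
      simp only [sub_mul, mul_sub, smul_mul_assoc, mul_smul_comm, one_mul, pow_two]
      noncomm_ring
    have h3 : τ (X i * (Y j * X l)) = 0 :=
      free_three τ hfree hij hkl (hmem i) (hYmem j) (hmem l) (hcent i) (hY0 j) (hcent l)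
    rw [e1, map_add, h3, hτs, zero_add]
    by_cases hil : i = l
    · subst hil
      rw [show X i * X i = X i ^ 2 from (pow_two _).symm, hvar]
      simp [hij]; ring
    · rw [h2 i l hil, mul_zero]
      simp [hij, hil]
  · -- i ≠ j, j ≠ k, k = l
    subst hkl
    have e1 : X i * X j * (X k * X k) = X i * (X j * Y k) + v • (X i * X j) := by
      rw [hYdef]
      simp only [sub_mul, mul_sub, smul_mul_assoc, mul_smul_comm, one_mul, pow_two]
      noncomm_ring
    have h3 : τ (X i * (X j * Y k)) = 0 :=
      free_three τ hfree hij hjk (hmem i) (hmem j) (hYmem k) (hcent i) (hcent j) (hY0 k)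
    rw [e1, map_add, h3, hτs, h2 i j hij, mul_zero, add_zero]
    simp [hij, hjk]
  · -- all consecutive distinct
    rw [free_four τ hfree hij hjk hkl (hmem i) (hmem j) (hmem k) (hmem l)
      (hcent i) (hcent j) (hcent k) (hcent l)]
    simp [hij, hjk, hkl]

end Classify

/-- Free CLT at the level of second and fourth moments: for a freely independent,
identically distributed, centered self-adjoint sequence with variance `σ²`,
`Sₙ = (A₁ + ⋯ + Aₙ)/√n` satisfies `τ(Sₙ²) = σ²` and `τ(Sₙ⁴) → 2σ⁴`. -/
theorem free_clt_moments {A : Type*} [Ring A] [StarRing A] [Algebra ℂ A] [StarModule ℂ A]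
    (τ : A →ₗ[ℂ] ℂ) (hτ1 : τ 1 = 1)
    (htrace : ∀ x y : A, τ (x * y) = τ (y * x))
    (X : ℕ → A) (σ : ℝ)
    (hsa : ∀ j, star (X j) = X j)
    (hfree : FreeFamily τ (fun j => Algebra.adjoin ℂ {X j}))
    (hident : ∀ j k m : ℕ, τ (X j ^ m) = τ (X k ^ m))
    (hcent : ∀ j, τ (X j) = 0)
    (hvar : ∀ j, τ (X j ^ 2) = (σ ^ 2 : ℝ))
    (S : ℕ → A)
    (hS : ∀ n, S n = ((Real.sqrt n : ℂ)⁻¹) • ∑ i ∈ Finset.range n, X i) :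
    (∀ n : ℕ, 1 ≤ n → τ (S n ^ 2) = (σ ^ 2 : ℝ)) ∧
    Tendsto (fun n => τ (S n ^ 4)) atTop (nhds ((2 * σ ^ 4 : ℝ) : ℂ)) := by
  set v : ℂ := ((σ ^ 2 : ℝ) : ℂ) with hv
  set m4 : ℂ := τ (X 0 ^ 4) with hm4def
  have hm4 : ∀ j, τ (X j ^ 4) = m4 := fun j => hident j 0 4
  have hmem : ∀ m : ℕ, X m ∈ Algebra.adjoin ℂ {X m} :=
    fun m => Algebra.subset_adjoin (Set.mem_singleton _)
  have h2 : ∀ m n : ℕ, m ≠ n → τ (X m * X n) = 0 :=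
    fun m n h => free_two τ hfree h (hmem m) (hmem n) (hcent m) (hcent n)
  have hM2 : ∀ i j : ℕ, τ (X i * X j) = if i = j then v else 0 := by
    intro i j
    by_cases h : i = j
    · subst h; rw [if_pos rfl, ← pow_two, hvar]
    · rw [if_neg h, h2 i j h]
  have hM : ∀ i j k l : ℕ, τ (X i * X j * (X k * X l)) =
      (if k = l ∧ i = j then v ^ 2 else 0) + (if i = l ∧ j = k then v ^ 2 else 0)
        + (if k = l ∧ j = k ∧ i = j then m4 - 2 * v ^ 2 else 0) :=
    classify τ hτ1 htrace X v m4 hfree hcent hvar hm4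
  -- basic facts about n and √n
  have hsqrt : ∀ n : ℕ, ((Real.sqrt n : ℝ) : ℂ) ^ 2 = (n : ℂ) := by
    intro n
    have : (Real.sqrt n) ^ 2 = (n : ℝ) := Real.sq_sqrt (Nat.cast_nonneg n)
    exact_mod_cast congrArg (fun x : ℝ => (x : ℂ)) this
  -- Second moment
  have part1 : ∀ n : ℕ, 1 ≤ n → τ (S n ^ 2) = (σ ^ 2 : ℝ) := by
    intro n hn
    have hn0 : (n : ℂ) ≠ 0 := Nat.cast_ne_zero.mpr (by omega)
    rw [hS n, smul_pow, map_smul, smul_eq_mul]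
    have e2 : (∑ i ∈ Finset.range n, X i) ^ 2 =
        ∑ i ∈ Finset.range n, ∑ j ∈ Finset.range n, X i * X j := by
      rw [pow_two, Finset.sum_mul_sum]
    rw [e2]
    simp only [map_sum, hM2]
    simp only [Finset.sum_ite_eq, Finset.mem_range, Finset.sum_const,
      Finset.card_range, nsmul_eq_mul]
    have : ∑ i ∈ Finset.range n, (if i < n then v else 0) = (n : ℂ) * v := by
      rw [Finset.sum_congr rfl (fun i hi => if_pos (Finset.mem_range.mp hi))]
      simp [Finset.sum_const, Finset.card_range]
    rw [this, inv_pow, hsqrt n]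
    field_simp
    push_cast [hv]
    norm_num
  refine ⟨part1, ?_⟩
  -- Fourth moment
  have key : ∀ n : ℕ, 1 ≤ n →
      τ (S n ^ 4) = 2 * v ^ 2 + (m4 - 2 * v ^ 2) * (n : ℂ)⁻¹ := by
    intro n hn
    have hn0 : (n : ℂ) ≠ 0 := Nat.cast_ne_zero.mpr (by omega)
    rw [hS n, smul_pow, map_smul, smul_eq_mul]
    have e4 : (∑ i ∈ Finset.range n, X i) ^ 4 =
        ∑ i ∈ Finset.range n, ∑ k ∈ Finset.range n, ∑ j ∈ Finset.range n,
          ∑ l ∈ Finset.range n, X i * X j * (X k * X l) := by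
      rw [show (4 : ℕ) = 2 + 2 from rfl, pow_add, pow_two, Finset.sum_mul_sum,
        Finset.sum_mul_sum]
      exact Finset.sum_congr rfl fun i _ => Finset.sum_congr rfl fun k _ => by
        rw [Finset.sum_mul_sum]
    rw [e4]
    simp only [map_sum, hM]
    simp only [Finset.sum_add_distrib, ite_and, Finset.sum_ite_eq,
      Finset.sum_ite_eq', Finset.mem_range, Finset.sum_const,
      Finset.card_range, nsmul_eq_mul]
    have hco : ((Real.sqrt n : ℂ))⁻¹ ^ 4 = ((n : ℂ) * (n : ℂ))⁻¹ := by
      rw [inv_pow, show (4 : ℕ) = 2 * 2 from rfl, pow_mul, hsqrt n, ← pow_two]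
    have hguard : ∀ (f : ℕ → ℂ),
        (∑ x ∈ Finset.range n, if x < n then f x else 0)
          = ∑ x ∈ Finset.range n, f x :=
      fun f => Finset.sum_congr rfl fun a ha => if_pos (Finset.mem_range.mp ha)
    rw [hco]
    simp only [sum_if_const, hguard, Finset.sum_ite_eq, Finset.sum_ite_eq',
      Finset.mem_range, Finset.sum_const, Finset.card_range, nsmul_eq_mul]
    field_simp
    ring
  have h0 : Tendsto (fun n : ℕ => ((n : ℂ))⁻¹) atTop (nhds 0) := by
    have h1 := (Complex.continuous_ofReal.tendsto 0).comp
      tendsto_inv_atTop_nhds_zero_nat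
    have he : (Complex.ofReal ∘ fun n : ℕ => ((n : ℝ))⁻¹)
        = fun n : ℕ => ((n : ℂ))⁻¹ := by
      funext n; simp
    rw [he] at h1
    simpa using h1
  have hlim : Tendsto (fun n : ℕ => 2 * v ^ 2 + (m4 - 2 * v ^ 2) * (n : ℂ)⁻¹)
      atTop (nhds (2 * v ^ 2)) := by
    simpa using tendsto_const_nhds.add (tendsto_const_nhds.mul h0)
  have heq : (fun n => τ (S n ^ 4)) =ᶠ[atTop]
      fun n : ℕ => 2 * v ^ 2 + (m4 - 2 * v ^ 2) * (n : ℂ)⁻¹ :=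
    (eventually_ge_atTop 1).mono fun n hn => key n hn
  have hval : ((2 * σ ^ 4 : ℝ) : ℂ) = 2 * v ^ 2 := by rw [hv]; push_cast; ring
  rw [hval]
  exact Tendsto.congr' heq.symm hlim
end
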